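/- For every positive integer n and every odd integer k ≥ 3 with n ≥ (k−1)/2, the pair (2n, kn) is tame: for every integer c > kn there exists a tame polynomial automorphism of C^3 with multidegree (2n, kn, c). -/

import Mathlib

open MvPolynomial Finset

/-- A polynomial map `ℂ^n → ℂ^n`, given by its coordinate polynomials. -/
abbrev PolyMap (n : ℕ) := Fin n → MvPolynomial (Fin n) ℂ

/-- Composition of polynomial maps: `(compPM F G) = F ∘ G`. -/
noncomputable def compPM {n : ℕ} (F G : PolyMap n) : PolyMap n :=
  fun i => aeval G (F i)

/-- The identity polynomial map. -/
noncomputable def idPM (n : ℕ) : PolyMap n := fun i => X i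

/-- `F` is a polynomial automorphism: it has a polynomial inverse. -/
def IsPolyAut {n : ℕ} (F : PolyMap n) : Prop :=
  ∃ G : PolyMap n, compPM F G = idPM n ∧ compPM G F = idPM n

/-- `F` is elementary: it changes one coordinate `j` by adding a polynomial
not involving the variable `j`. -/
def IsElementaryPM {n : ℕ} (F : PolyMap n) : Prop :=
  ∃ (j : Fin n) (g : MvPolynomial (Fin n) ℂ),
    degreeOf j g = 0 ∧ F j = X j + g ∧ ∀ i, i ≠ j → F i = X i

/-- `F` is a linear (degree ≤ 1) automorphism. -/
def IsLinearPM {n : ℕ} (F : PolyMap n) : Prop :=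
  IsPolyAut F ∧ ∀ i, (F i).totalDegree ≤ 1

/-- `F` is tame: a composition of linear and elementary automorphisms. -/
inductive IsTamePM : {n : ℕ} → PolyMap n → Prop
  | lin {n} (F : PolyMap n) : IsLinearPM F → IsTamePM F
  | elem {n} (F : PolyMap n) : IsElementaryPM F → IsTamePM F
  | comp {n} (F G : PolyMap n) : IsTamePM F → IsTamePM G → IsTamePM (compPM F G)

/-- The multidegree of a polynomial map of `ℂ^3`. -/
noncomputable def mdeg3 (F : PolyMap 3) : ℕ × ℕ × ℕ :=
  ((F 0).totalDegree, (F 1).totalDegree, (F 2).totalDegree)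

/-!
Write `k = 2m + 1` and `c = 2np + kn + t` with `1 ≤ t ≤ 2n`. Let `γ` be the truncation at degree
`m` of the power series `√((1 + x)^k)` and `g = z^n γʰ(x, z^(2n))`, where `γʰ` is the degree-`m`
homogenization. Then `g² - (x + z^(2n))^k = x^(m+1) Sʰ(x, z^(2n))` with `S` of degree `≤ m`, so
its total degree is at most `(m + 1) + 2nm`, which is `≤ kn + 1` exactly when `m ≤ n`.

The elementary maps `y ↦ y + g + z^t`, `x ↦ x + z^(2n)`, `z ↦ z + x^p (y² - x^k)` compose to
`(f, h, z + f^p (h² - f^k))` with `f = x + z^(2n)`, `h = y + g + z^t`. In `h² - f^k` the terms of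
degree `2kn` cancel, every remaining term has degree `≤ kn + t`, and `2 z^(kn+t)` survives; hence
the multidegree is `(2n, kn, 2np + kn + t)`. Lower bounds on total degrees are read off after
restricting to the `z`-axis, which does not raise the total degree.
-/

namespace MvPolynomial

variable {σ τ R : Type*} [CommSemiring R]

lemma aeval_eq_self_of_forall_mem_vars {f : σ → MvPolynomial σ R} {p : MvPolynomial σ R}
    (hf : ∀ i ∈ p.vars, f i = X i) : aeval f p = p := by
  conv_rhs => rw [← aeval_X_left_apply p]
  exact eval₂Hom_congr' rfl (fun i hi _ => hf i hi) rfl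

lemma totalDegree_aeval_le {f : σ → MvPolynomial τ R} {D : ℕ} (hf : ∀ i, (f i).totalDegree ≤ D)
    (p : MvPolynomial σ R) : (aeval f p).totalDegree ≤ p.totalDegree * D := by
  conv_lhs => rw [p.as_sum, map_sum]
  refine totalDegree_finsetSum_le fun d hd => ?_
  rw [aeval_monomial]
  calc _ ≤ (algebraMap R (MvPolynomial τ R) (coeff d p)).totalDegree +
        (d.prod fun i k => f i ^ k).totalDegree := totalDegree_mul _ _
    _ ≤ 0 + d.sum fun _ k => k * D := by
        refine add_le_add (totalDegree_C _).le ((totalDegree_finsetProd _ _).trans ?_)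
        exact Finset.sum_le_sum fun i _ =>
          (totalDegree_pow _ _).trans (Nat.mul_le_mul_left _ (hf i))
    _ = (d.sum fun _ k => k) * D := by rw [zero_add, Finsupp.sum_mul]
    _ ≤ p.totalDegree * D := Nat.mul_le_mul_right _ (le_totalDegree hd)

lemma aeval_mem {A : Type*} [CommSemiring A] [Algebra R A] {S : Subalgebra R A} {f : σ → A}
    (hf : ∀ i, f i ∈ S) (p : MvPolynomial σ R) : aeval f p ∈ S :=
  Algebra.adjoin_le (Set.range_subset_iff.2 hf) (aeval_range (R := R) f ▸ AlgHom.mem_range_self _ p)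

lemma degreeOf_eq_zero_of_mem_supported {p : MvPolynomial σ R} {j : σ}
    (hp : p ∈ supported R {j}ᶜ) : degreeOf j p = 0 := by
  by_contra h
  exact mem_supported.1 hp (mem_vars_iff_degreeOf_ne_zero.2 h) rfl

lemma totalDegree_pow_of_noZeroDivisors [NoZeroDivisors R] (p : MvPolynomial σ R) (k : ℕ) :
    (p ^ k).totalDegree = k * p.totalDegree := by
  rcases eq_or_ne p 0 with rfl | hp
  · cases k <;> simp
  induction k with
  | zero => simp
  | succ k ih =>
    rw [pow_succ, totalDegree_mul_of_isDomain (pow_ne_zero _ hp) hp, ih, add_one_mul]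

lemma totalDegree_add_le_of_le {p q : MvPolynomial σ R} {d : ℕ} (hp : p.totalDegree ≤ d)
    (hq : q.totalDegree ≤ d) : (p + q).totalDegree ≤ d :=
  (totalDegree_add p q).trans (max_le hp hq)

lemma totalDegree_mul_le_of_le {p q : MvPolynomial σ R} {a b : ℕ} (hp : p.totalDegree ≤ a)
    (hq : q.totalDegree ≤ b) : (p * q).totalDegree ≤ a + b :=
  (totalDegree_mul p q).trans (add_le_add hp hq)

lemma totalDegree_C_mul_X_pow_add_X_pow [Nontrivial R] {i : σ} {c : R} (hc : c ≠ 0) {a b : ℕ}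
    (hba : b < a) : (C c * X i ^ a + X i ^ b : MvPolynomial σ R).totalDegree = a := by
  have hdeg : (C c * X i ^ a : MvPolynomial σ R).totalDegree = a := by
    rw [C_mul_X_pow_eq_monomial, totalDegree_monomial _ hc, Finsupp.sum_single_index rfl]
  rw [totalDegree_add_eq_left_of_totalDegree_lt (by rwa [hdeg, totalDegree_X_pow]), hdeg]

end MvPolynomial

section PolyMaps

variable {n : ℕ}

lemma compPM_assoc (F G H : PolyMap n) :
    compPM (compPM F G) H = compPM F (compPM G H) := by
  funext i
  exact comp_aeval_apply (f := G) (aeval H) (F i)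

lemma idPM_compPM (F : PolyMap n) : compPM (idPM n) F = F := by
  funext i
  exact aeval_X F i

lemma compPM_idPM (F : PolyMap n) : compPM F (idPM n) = F := by
  funext i
  exact aeval_X_left_apply (F i)

lemma IsPolyAut.comp {F G : PolyMap n} (hF : IsPolyAut F) (hG : IsPolyAut G) :
    IsPolyAut (compPM F G) := by
  obtain ⟨F', hFF', hF'F⟩ := hF
  obtain ⟨G', hGG', hG'G⟩ := hG
  refine ⟨compPM G' F', ?_, ?_⟩
  · rw [compPM_assoc, ← compPM_assoc G, hGG', idPM_compPM, hFF']
  · rw [compPM_assoc, ← compPM_assoc F', hF'F, idPM_compPM, hG'G]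

noncomputable def elementaryPM (j : Fin n) (g : MvPolynomial (Fin n) ℂ) : PolyMap n :=
  Function.update (idPM n) j (X j + g)

@[simp]
lemma elementaryPM_self (j : Fin n) (g : MvPolynomial (Fin n) ℂ) :
    elementaryPM j g j = X j + g :=
  Function.update_self ..

lemma elementaryPM_of_ne {i j : Fin n} (hij : i ≠ j) (g : MvPolynomial (Fin n) ℂ) :
    elementaryPM j g i = X i :=
  Function.update_of_ne hij ..

lemma isElementaryPM_elementaryPM {j : Fin n} {g : MvPolynomial (Fin n) ℂ}
    (hg : degreeOf j g = 0) : IsElementaryPM (elementaryPM j g) :=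
  ⟨j, g, hg, elementaryPM_self j g, fun _ hi => elementaryPM_of_ne hi g⟩

lemma IsElementaryPM.exists_eq_elementaryPM {F : PolyMap n} (hF : IsElementaryPM F) :
    ∃ j g, degreeOf j g = 0 ∧ F = elementaryPM j g := by
  obtain ⟨j, g, hg, hFj, hFi⟩ := hF
  refine ⟨j, g, hg, funext fun i => ?_⟩
  rcases eq_or_ne i j with rfl | hij
  · rw [hFj, elementaryPM_self]
  · rw [hFi i hij, elementaryPM_of_ne hij]

lemma elementaryPM_compPM_elementaryPM_neg {j : Fin n} {g : MvPolynomial (Fin n) ℂ}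
    (hg : degreeOf j g = 0) : compPM (elementaryPM j g) (elementaryPM j (-g)) = idPM n := by
  have hfix : aeval (elementaryPM j (-g)) g = g := by
    refine aeval_eq_self_of_forall_mem_vars fun i hi => ?_
    have hij : i ≠ j := by
      rintro rfl
      exact (mem_vars_iff_degreeOf_ne_zero.1 hi) hg
    exact elementaryPM_of_ne hij _
  funext i
  rcases eq_or_ne i j with rfl | hij
  · rw [compPM, elementaryPM_self, map_add, aeval_X, hfix, elementaryPM_self, idPM]
    ring
  · rw [compPM, elementaryPM_of_ne hij, aeval_X, elementaryPM_of_ne hij, idPM]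

lemma IsElementaryPM.isPolyAut {F : PolyMap n} (hF : IsElementaryPM F) : IsPolyAut F := by
  obtain ⟨j, g, hg, rfl⟩ := hF.exists_eq_elementaryPM
  refine ⟨elementaryPM j (-g), elementaryPM_compPM_elementaryPM_neg hg, ?_⟩
  simpa using elementaryPM_compPM_elementaryPM_neg (g := -g) (by rwa [degreeOf_neg])

lemma IsTamePM.isPolyAut {F : PolyMap n} (hF : IsTamePM F) : IsPolyAut F := by
  induction hF with
  | lin F hF => exact hF.1
  | elem F hF => exact hF.isPolyAut
  | comp F G _ _ ihF ihG => exact ihF.comp ihG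

end PolyMaps

namespace Polynomial

variable {K : Type*} [Field K]

lemma exists_natDegree_le_X_pow_dvd_sq_sub (h2 : (2 : K) ≠ 0) {f : K[X]} (hf : f.coeff 0 = 1)
    (M : ℕ) : ∃ γ : K[X], γ.natDegree ≤ M ∧ γ.coeff 0 = 1 ∧ X ^ (M + 1) ∣ γ ^ 2 - f := by
  induction M with
  | zero =>
    refine ⟨1, natDegree_one.le, coeff_one_zero, ?_⟩
    rw [zero_add, pow_one, X_dvd_iff, coeff_sub, one_pow, coeff_one_zero, hf, sub_self]
  | succ M ih =>
    obtain ⟨γ, hdeg, hγ0, h, hh⟩ := ih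
    -- Newton step: the correction `c X^(M+1)` kills the next coefficient of `γ^2 - f`.
    set c := h.coeff 0 / 2
    refine ⟨γ - C c * X ^ (M + 1), ?_, ?_, ?_⟩
    · exact (natDegree_sub_le_of_le (hdeg.trans M.le_succ) (natDegree_C_mul_X_pow_le c _)).trans
        (max_self _).le
    · simp [hγ0]
    · have hsq : (γ - C c * X ^ (M + 1)) ^ 2 - f =
          X ^ (M + 1) * (h - 2 * C c * γ + C c ^ 2 * X ^ (M + 1)) := by
        linear_combination hh
      rw [hsq, pow_succ]
      refine mul_dvd_mul_left _ (X_dvd_iff.2 ?_)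
      have hc : h.coeff 0 - 2 * c = 0 := by rw [mul_div_cancel₀ _ h2, sub_self]
      simpa [hγ0, ← C_ofNat, coeff_C_mul] using hc

lemma homogenize_pow {R : Type*} [CommSemiring R] {p : R[X]} {d : ℕ} (hp : p.natDegree ≤ d)
    (k : ℕ) : homogenize (p ^ k) (k * d) = homogenize p d ^ k := by
  induction k with
  | zero => simp
  | succ k ih =>
    rw [pow_succ, add_one_mul, homogenize_mul _ _ ((natDegree_pow_le).trans
      (Nat.mul_le_mul_left k hp)) hp, ih, pow_succ]

lemma aeval_homogenize_of_eq_zero {R A : Type*} [CommSemiring R] [CommSemiring A] [Algebra R A]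
    {p : R[X]} {d : ℕ} (hp : p.natDegree ≤ d) (g : Fin 2 → A) (hg : g 0 = 0) :
    MvPolynomial.aeval g (p.homogenize d) = algebraMap R A (p.coeff 0) * g 1 ^ d := by
  refine Polynomial.induction_with_natDegree_le
    (fun p => MvPolynomial.aeval g (p.homogenize d) = algebraMap R A (p.coeff 0) * g 1 ^ d) d
    (by simp) (fun k r _ hk => ?_) (fun p q _ _ hp hq => by simp [hp, hq, add_mul]) p hp
  rw [homogenize_C_mul, homogenize_X_pow hk]
  rcases k.eq_zero_or_pos with rfl | hk0
  · simp
  · simp [hg, zero_pow hk0.ne', coeff_X_pow, hk0.ne]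

lemma exists_homogenize_sq_sub_eq {K : Type*} [Field K] (h2 : (2 : K) ≠ 0) (m : ℕ) :
    ∃ γ S : K[X], γ.natDegree ≤ m ∧ γ.coeff 0 = 1 ∧
      MvPolynomial.X 1 * γ.homogenize m ^ 2 - (MvPolynomial.X 0 + MvPolynomial.X 1) ^ (2 * m + 1) =
        MvPolynomial.X 0 ^ (m + 1) * S.homogenize m := by
  have hlin : (X + 1 : K[X]).natDegree ≤ 1 := by compute_degree
  obtain ⟨γ, hdeg, hγ0, S, hS⟩ := exists_natDegree_le_X_pow_dvd_sq_sub h2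
    (f := (X + 1) ^ (2 * m + 1)) (by simp [coeff_zero_eq_eval_zero]) m
  have hSdeg : S.natDegree ≤ m := by
    rcases eq_or_ne S 0 with rfl | hS0
    · simp
    have hle : (γ ^ 2 - (X + 1) ^ (2 * m + 1)).natDegree ≤ 2 * m + 1 :=
      (natDegree_sub_le _ _).trans (max_le ((natDegree_pow_le (p := γ) (n := 2)).trans (by omega))
        ((natDegree_pow_le (p := X + 1) (n := 2 * m + 1)).trans (by nlinarith)))
    rw [hS, natDegree_X_pow_mul (n := m + 1) hS0] at hle
    omega
  refine ⟨γ, S, hdeg, hγ0, ?_⟩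
  have hsq : homogenize (γ ^ 2) (1 + 2 * m) = MvPolynomial.X 1 * γ.homogenize m ^ 2 := by
    rw [← one_mul (γ ^ 2), homogenize_mul (m := 1) (n := 2 * m) _ _ (by simp)
      ((natDegree_pow_le (p := γ) (n := 2)).trans (by omega)), homogenize_pow hdeg,
      homogenize_one, pow_one]
  have hbin : homogenize ((X + 1 : K[X]) ^ (2 * m + 1)) (1 + 2 * m) =
      (MvPolynomial.X 0 + MvPolynomial.X 1) ^ (2 * m + 1) := by
    rw [show 1 + 2 * m = (2 * m + 1) * 1 by ring, homogenize_pow hlin, homogenize_add,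
      homogenize_X one_ne_zero, homogenize_one, Nat.sub_self, pow_zero, mul_one, pow_one]
  have hrhs : homogenize (X ^ (m + 1) * S) (1 + 2 * m) =
      MvPolynomial.X 0 ^ (m + 1) * S.homogenize m := by
    rw [show 1 + 2 * m = m + 1 + m by ring, homogenize_mul _ _ (natDegree_X_pow_le _) hSdeg,
      homogenize_X_pow le_rfl, Nat.sub_self, pow_zero, mul_one]
  rw [← hsq, ← hbin, ← homogenize_sub, hS, hrhs]

end Polynomial

noncomputable def restrictZAxis : MvPolynomial (Fin 3) ℂ →ₐ[ℂ] MvPolynomial (Fin 3) ℂ :=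
  aeval ![0, 0, X 2]

@[simp] lemma restrictZAxis_X_zero : restrictZAxis (X 0) = 0 := aeval_X _ _
@[simp] lemma restrictZAxis_X_one : restrictZAxis (X 1) = 0 := aeval_X _ _
@[simp] lemma restrictZAxis_X_two : restrictZAxis (X 2) = X 2 := aeval_X _ _

lemma totalDegree_restrictZAxis_le (p : MvPolynomial (Fin 3) ℂ) :
    (restrictZAxis p).totalDegree ≤ p.totalDegree := by
  refine (totalDegree_aeval_le (fun i => ?_) p).trans_eq (mul_one _)
  fin_cases i <;> simp

section Construction

variable (n k p t : ℕ) (g : MvPolynomial (Fin 3) ℂ)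

noncomputable def tameMap : PolyMap 3 :=
  compPM (elementaryPM 2 (X 0 ^ p * (X 1 ^ 2 - X 0 ^ k)))
    (compPM (elementaryPM 0 (X 2 ^ (2 * n))) (elementaryPM 1 (g + X 2 ^ t)))

lemma tameMap_zero : tameMap n k p t g 0 = X 0 + X 2 ^ (2 * n) := by
  simp [tameMap, compPM, elementaryPM_of_ne]

lemma tameMap_one : tameMap n k p t g 1 = X 1 + (g + X 2 ^ t) := by
  simp [tameMap, compPM, elementaryPM_of_ne]

lemma tameMap_two : tameMap n k p t g 2 =
    X 2 + tameMap n k p t g 0 ^ p * (tameMap n k p t g 1 ^ 2 - tameMap n k p t g 0 ^ k) := by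
  simp [tameMap, compPM, elementaryPM_of_ne]

end Construction

lemma isTamePM_tameMap (n k p t : ℕ) {g : MvPolynomial (Fin 3) ℂ} (hg : g ∈ supported ℂ {1}ᶜ) :
    IsTamePM (tameMap n k p t g) := by
  have hX : ∀ {i j : Fin 3}, i ≠ j → X i ∈ supported ℂ ({j}ᶜ : Set (Fin 3)) :=
    fun h => X_mem_supported.2 h
  refine .comp _ _ (.elem _ (isElementaryPM_elementaryPM (degreeOf_eq_zero_of_mem_supported ?_)))
    (.comp _ _ (.elem _ (isElementaryPM_elementaryPM (degreeOf_eq_zero_of_mem_supported ?_)))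
      (.elem _ (isElementaryPM_elementaryPM (degreeOf_eq_zero_of_mem_supported ?_))))
  · exact mul_mem (pow_mem (hX (by decide)) _)
      (sub_mem (pow_mem (hX (by decide)) _) (pow_mem (hX (by decide)) _))
  · exact pow_mem (hX (by decide)) _
  · exact add_mem hg (pow_mem (hX (by decide)) _)

section Degrees

variable {n k p t : ℕ} {g : MvPolynomial (Fin 3) ℂ}

lemma totalDegree_tameMap_zero (hn : 0 < n) : (tameMap n k p t g 0).totalDegree = 2 * n := by
  rw [tameMap_zero]
  refine le_antisymm (totalDegree_add_le_of_le ?_ ?_) ?_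
  · rw [totalDegree_X]; omega
  · rw [totalDegree_X_pow]
  · have h := totalDegree_restrictZAxis_le (X 0 + X 2 ^ (2 * n))
    rwa [map_add, map_pow, restrictZAxis_X_zero, restrictZAxis_X_two, zero_add,
      totalDegree_X_pow] at h

lemma totalDegree_tameMap_one (hg : g.totalDegree ≤ k * n) (hgz : restrictZAxis g = X 2 ^ (k * n))
    (htk : t < k * n) : (tameMap n k p t g 1).totalDegree = k * n := by
  rw [tameMap_one]
  refine le_antisymm (totalDegree_add_le_of_le ?_ (totalDegree_add_le_of_le hg ?_)) ?_
  · rw [totalDegree_X]; omega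
  · rw [totalDegree_X_pow]; omega
  · have h := totalDegree_restrictZAxis_le (X 1 + (g + X 2 ^ t))
    rwa [map_add, map_add, map_pow, hgz, restrictZAxis_X_one, restrictZAxis_X_two, zero_add,
      ← one_mul (X 2 ^ (k * n)), ← C_1, totalDegree_C_mul_X_pow_add_X_pow one_ne_zero htk] at h

lemma totalDegree_tameMap_sq_sub (hg : g.totalDegree ≤ k * n)
    (hgz : restrictZAxis g = X 2 ^ (k * n))
    (hgk : (g ^ 2 - (X 0 + X 2 ^ (2 * n)) ^ k).totalDegree ≤ k * n + 1)
    (ht : 1 ≤ t) (htk : t < k * n) :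
    (tameMap n k p t g 1 ^ 2 - tameMap n k p t g 0 ^ k).totalDegree = k * n + t := by
  rw [tameMap_zero, tameMap_one]
  refine le_antisymm ?_ ?_
  · have hexp : (X 1 + (g + X 2 ^ t)) ^ 2 - (X 0 + X 2 ^ (2 * n)) ^ k =
        X 1 * (X 1 + C 2 * (g + X 2 ^ t)) + X 2 ^ t * (C 2 * g + X 2 ^ t) +
          (g ^ 2 - (X 0 + X 2 ^ (2 * n)) ^ k) := by
      rw [show (C 2 : MvPolynomial (Fin 3) ℂ) = 2 from map_ofNat C 2]
      ring
    have hXt : (X 2 ^ t : MvPolynomial (Fin 3) ℂ).totalDegree ≤ k * n := by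
      rw [totalDegree_X_pow]; omega
    have hCg : ∀ q : MvPolynomial (Fin 3) ℂ, q.totalDegree ≤ k * n →
        (C 2 * q).totalDegree ≤ k * n := fun q hq =>
      (totalDegree_mul_le_of_le (totalDegree_C _).le hq).trans_eq (zero_add _)
    rw [hexp]
    refine totalDegree_add_le_of_le (totalDegree_add_le_of_le ?_ ?_) (hgk.trans (by omega))
    · refine (totalDegree_mul_le_of_le (totalDegree_X _).le (totalDegree_add_le_of_le ?_
        (hCg _ (totalDegree_add_le_of_le hg hXt)))).trans (by omega)
      rw [totalDegree_X]; omega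
    · refine (totalDegree_mul_le_of_le (totalDegree_X_pow _ _).le
        (totalDegree_add_le_of_le (hCg _ hg) hXt)).trans (by omega)
  · have hz : restrictZAxis ((X 1 + (g + X 2 ^ t)) ^ 2 - (X 0 + X 2 ^ (2 * n)) ^ k) =
        C 2 * X 2 ^ (k * n + t) + X 2 ^ (2 * t) := by
      simp only [map_sub, map_add, map_pow, hgz, restrictZAxis_X_zero, restrictZAxis_X_one,
        restrictZAxis_X_two, zero_add]
      rw [show (C 2 : MvPolynomial (Fin 3) ℂ) = 2 from map_ofNat C 2]
      ring
    have h := totalDegree_restrictZAxis_le ((X 1 + (g + X 2 ^ t)) ^ 2 - (X 0 + X 2 ^ (2 * n)) ^ k)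
    rwa [hz, totalDegree_C_mul_X_pow_add_X_pow two_ne_zero (by omega)] at h

lemma totalDegree_tameMap_two (hn : 0 < n) (hg : g.totalDegree ≤ k * n)
    (hgz : restrictZAxis g = X 2 ^ (k * n))
    (hgk : (g ^ 2 - (X 0 + X 2 ^ (2 * n)) ^ k).totalDegree ≤ k * n + 1)
    (ht : 1 ≤ t) (htk : t < k * n) :
    (tameMap n k p t g 2).totalDegree = 2 * n * p + (k * n + t) := by
  have h0 := totalDegree_tameMap_zero (k := k) (p := p) (t := t) (g := g) hn
  have hW := totalDegree_tameMap_sq_sub (p := p) hg hgz hgk ht htk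
  have hne : ∀ q : MvPolynomial (Fin 3) ℂ, 0 < q.totalDegree → q ≠ 0 := by
    rintro q hq rfl
    simp at hq
  have hprod := totalDegree_mul_of_isDomain (pow_ne_zero p (hne (tameMap n k p t g 0) (by omega)))
    (hne (tameMap n k p t g 1 ^ 2 - tameMap n k p t g 0 ^ k) (by omega))
  rw [totalDegree_pow_of_noZeroDivisors, h0, hW] at hprod
  rw [tameMap_two, totalDegree_add_eq_right_of_totalDegree_lt] <;> rw [hprod]
  · ring
  · rw [totalDegree_X]; omega

end Degrees

lemma exists_approx_sqrt {n m : ℕ} (hn : 0 < n) (hmn : m ≤ n) :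
    ∃ g ∈ supported ℂ ({1}ᶜ : Set (Fin 3)), g.totalDegree ≤ (2 * m + 1) * n ∧
      restrictZAxis g = X 2 ^ ((2 * m + 1) * n) ∧
      (g ^ 2 - (X 0 + X 2 ^ (2 * n)) ^ (2 * m + 1)).totalDegree ≤ (2 * m + 1) * n + 1 := by
  obtain ⟨γ, S, hdeg, hγ0, hid⟩ := Polynomial.exists_homogenize_sq_sub_eq (K := ℂ) two_ne_zero m
  set σ : MvPolynomial (Fin 2) ℂ →ₐ[ℂ] MvPolynomial (Fin 3) ℂ := aeval ![X 0, X 2 ^ (2 * n)]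
  have hσ : ∀ i, (![X 0, X 2 ^ (2 * n)] i : MvPolynomial (Fin 3) ℂ).totalDegree ≤ 2 * n := by
    intro i
    fin_cases i
    · exact (totalDegree_X _).trans_le (by omega)
    · exact (totalDegree_X_pow _ _).le
  have hσdeg (q : Polynomial ℂ) : (σ (q.homogenize m)).totalDegree ≤ m * (2 * n) :=
    (totalDegree_aeval_le hσ _).trans
      (Nat.mul_le_mul_right _ (Polynomial.isHomogeneous_homogenize q).totalDegree_le)
  refine ⟨X 2 ^ n * σ (γ.homogenize m), ?_, ?_, ?_, ?_⟩
  · refine mul_mem (pow_mem (X_mem_supported.2 (by decide)) _) (aeval_mem (fun i => ?_) _)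
    fin_cases i
    · exact X_mem_supported.2 (by decide)
    · exact pow_mem (X_mem_supported.2 (by decide)) _
  · refine (totalDegree_mul_le_of_le (totalDegree_X_pow _ _).le (hσdeg γ)).trans_eq ?_
    ring
  · rw [map_mul, map_pow, restrictZAxis_X_two, comp_aeval_apply,
      Polynomial.aeval_homogenize_of_eq_zero hdeg _ (by simp), hγ0]
    simp only [Fin.isValue, Matrix.cons_val_one, Matrix.cons_val_zero, map_pow,
      restrictZAxis_X_two, map_one, one_mul]
    ring
  · have hQ : (X 2 ^ n * σ (γ.homogenize m)) ^ 2 - (X 0 + X 2 ^ (2 * n)) ^ (2 * m + 1) =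
        X 0 ^ (m + 1) * σ (S.homogenize m) := by
      have hσ0 : σ (X 0) = X 0 := aeval_X _ _
      have hσ1 : σ (X 1) = X 2 ^ (2 * n) := aeval_X _ _
      have h := congrArg σ hid
      simp only [map_sub, map_mul, map_pow, map_add, hσ0, hσ1] at h
      rw [← h]
      ring
    rw [hQ]
    refine (totalDegree_mul_le_of_le (totalDegree_X_pow _ _).le (hσdeg S)).trans ?_
    nlinarith

lemma Nat.exists_eq_mul_add_add_of_lt {a b c : ℕ} (hb : 0 < b) (hac : a < c) :
    ∃ p t, 1 ≤ t ∧ t ≤ b ∧ c = b * p + (a + t) := by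
  refine ⟨(c - a - 1) / b, (c - a - 1) % b + 1, by omega, Nat.mod_lt _ hb, ?_⟩
  have := Nat.div_add_mod (c - a - 1) b
  omega

theorem stmt14 (n k : ℕ) (hn : 0 < n) (hk : 3 ≤ k) (hko : Odd k)
    (hnk : k - 1 ≤ 2 * n) :
    ∀ c : ℕ, k * n < c →
      ∃ F : PolyMap 3, IsTamePM F ∧ IsPolyAut F ∧ mdeg3 F = (2 * n, k * n, c) := by
  intro c hc
  obtain ⟨m, rfl⟩ := hko
  obtain ⟨g, hg, hgdeg, hgz, hgk⟩ := exists_approx_sqrt hn (m := m) (by omega)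
  obtain ⟨p, t, ht, ht2n, rfl⟩ := Nat.exists_eq_mul_add_add_of_lt (b := 2 * n) (by omega) hc
  have htk : t < (2 * m + 1) * n := by nlinarith
  have hF := isTamePM_tameMap n (2 * m + 1) p t hg
  refine ⟨tameMap n (2 * m + 1) p t g, hF, hF.isPolyAut, ?_⟩
  rw [mdeg3, totalDegree_tameMap_zero hn, totalDegree_tameMap_one hgdeg hgz htk,
    totalDegree_tameMap_two hn hgdeg hgz hgk ht htk]
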